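/- arXiv:2506.07346 — 2 statements merged into one kernel-verified Lean document; each statement's English description precedes it below -/
import Mathlib

section
/- Let N ≥ 1 be an integer, let h : ℝ → ℝ be continuous with H(t) = ∫_0^t h(τ) dτ, and let v : ℝ^N → ℝ be continuously differentiable with compact support. Then for every t > 0 the stretched function v_t(x) := f⁻¹(t^(N/2) f(v(tx))) is continuously differentiable with compact support, and Ψ(v_t) = (t²/2) ∫_{ℝ^N} ((1 + 2 t^N f(v)²)/(1 + 2 f(v)²)) |∇v|² dx − t^(−N) ∫_{ℝ^N} H(t^(N/2) f(v)) dx. -/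
open MeasureTheory

/-- `g(s) = ∫_0^s √(1 + 2τ²) dτ`, the inverse of the dual function `f`. -/
noncomputable def g (s : ℝ) : ℝ := ∫ τ in (0:ℝ)..s, Real.sqrt (1 + 2 * τ ^ 2)

/-- The dual function `f = g⁻¹`. -/
noncomputable def f : ℝ → ℝ := Function.invFun g

/-- The mass-preserving stretching `v_t(x) = f⁻¹(t^{N/2} f(v(tx)))`. -/
noncomputable def stretch {N : ℕ} (t : ℝ) (v : EuclideanSpace ℝ (Fin N) → ℝ) :
    EuclideanSpace ℝ (Fin N) → ℝ :=
  fun x => Function.invFun f (t ^ ((N:ℝ) / 2) * f (v (t • x)))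

/-- The dual energy functional `Ψ(v) = (1/2)∫|∇v|² − ∫ H(f(v))`. -/
noncomputable def Psi {N : ℕ} (H : ℝ → ℝ) (v : EuclideanSpace ℝ (Fin N) → ℝ) : ℝ :=
  (1 / 2) * (∫ x : EuclideanSpace ℝ (Fin N), ‖gradient v x‖ ^ 2)
    - ∫ x : EuclideanSpace ℝ (Fin N), H (f (v x))


noncomputable def k (s : ℝ) : ℝ := Real.sqrt (1 + 2 * s ^ 2)

lemma one_add_pos (s : ℝ) : (0:ℝ) < 1 + 2 * s ^ 2 := by positivity

lemma k_pos (s : ℝ) : 0 < k s := Real.sqrt_pos.2 (one_add_pos s)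

lemma k_sq (s : ℝ) : k s ^ 2 = 1 + 2 * s ^ 2 := Real.sq_sqrt (one_add_pos s).le

lemma k_cont : Continuous k := by
  unfold k; continuity

lemma hasDerivAt_g (s : ℝ) : HasDerivAt g (k s) s := by
  have h1 : IntervalIntegrable (fun τ : ℝ => Real.sqrt (1 + 2 * τ ^ 2)) volume 0 s :=
    (k_cont.intervalIntegrable _ _)
  exact intervalIntegral.integral_hasDerivAt_right h1
    (k_cont.stronglyMeasurableAtFilter _ _) k_cont.continuousAt

lemma g_diff : Differentiable ℝ g := fun s => (hasDerivAt_g s).differentiableAt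

lemma deriv_g (s : ℝ) : deriv g s = k s := (hasDerivAt_g s).deriv

lemma g_zero : g 0 = 0 := by simp [g]

lemma g_strictMono : StrictMono g :=
  strictMono_of_deriv_pos (fun s => by rw [deriv_g]; exact k_pos s)

lemma g_ge_id (s : ℝ) (hs : 0 ≤ s) : s ≤ g s := by
  have hmono : Monotone (fun s => g s - s) := by
    apply monotone_of_deriv_nonneg (g_diff.sub differentiable_id)
    intro x
    have hd : HasDerivAt (fun y => g y - id y) (k x - 1) x := (hasDerivAt_g x).sub (hasDerivAt_id x)
    rw [show deriv (g - id) x = k x - 1 from hd.deriv]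
    have : (1:ℝ) ≤ k x := by
      rw [show (1:ℝ) = Real.sqrt 1 by simp]
      exact Real.sqrt_le_sqrt (by nlinarith)
    linarith
  have := hmono hs
  simp [g_zero] at this
  linarith

lemma g_le_id (s : ℝ) (hs : s ≤ 0) : g s ≤ s := by
  have hmono : Monotone (fun s => g s - s) := by
    apply monotone_of_deriv_nonneg (g_diff.sub differentiable_id)
    intro x
    have hd : HasDerivAt (fun y => g y - id y) (k x - 1) x := (hasDerivAt_g x).sub (hasDerivAt_id x)
    rw [show deriv (g - id) x = k x - 1 from hd.deriv]
    have : (1:ℝ) ≤ k x := by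
      rw [show (1:ℝ) = Real.sqrt 1 by simp]
      exact Real.sqrt_le_sqrt (by nlinarith)
    linarith
  have := hmono hs
  simp [g_zero] at this
  linarith

lemma g_surj : Function.Surjective g := by
  have h1 : Filter.Tendsto g Filter.atTop Filter.atTop :=
    Filter.tendsto_atTop_mono' _ (by filter_upwards [Filter.eventually_ge_atTop (0:ℝ)] with s hs; exact g_ge_id s hs) Filter.tendsto_id
  have h2 : Filter.Tendsto g Filter.atBot Filter.atBot :=
    Filter.tendsto_atBot_mono' _ (by filter_upwards [Filter.eventually_le_atBot (0:ℝ)] with s hs; exact g_le_id s hs) Filter.tendsto_id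
  exact Continuous.surjective g_diff.continuous h1 h2

lemma f_g (x : ℝ) : f (g x) = x := Function.leftInverse_invFun g_strictMono.injective x

lemma g_f (y : ℝ) : g (f y) = y := Function.rightInverse_invFun g_surj y

lemma f_zero : f 0 = 0 := by have := f_g 0; rwa [g_zero] at this

lemma f_inj : Function.Injective f := Function.LeftInverse.injective g_f

noncomputable def gIso : ℝ ≃o ℝ := StrictMono.orderIsoOfSurjective g g_strictMono g_surj

lemma gIso_coe : (gIso : ℝ → ℝ) = g := StrictMono.coe_orderIsoOfSurjective g g_strictMono g_surj

lemma f_eq_symm : f = ⇑gIso.symm := by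
  funext y
  apply g_strictMono.injective
  rw [g_f, ← congrFun gIso_coe (gIso.symm y), gIso.apply_symm_apply]

lemma f_cont : Continuous f := by
  rw [f_eq_symm]; exact OrderIso.continuous _

lemma hasDerivAt_f (y : ℝ) : HasDerivAt f (k (f y))⁻¹ y := by
  apply HasDerivAt.of_local_left_inverse f_cont.continuousAt (hasDerivAt_g (f y)) (k_pos _).ne'
  exact Filter.Eventually.of_forall g_f

lemma f_diff : Differentiable ℝ f := fun y => (hasDerivAt_f y).differentiableAt

lemma deriv_f (y : ℝ) : deriv f y = (k (f y))⁻¹ := (hasDerivAt_f y).deriv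

lemma contDiff_g : ContDiff ℝ 1 g := by
  rw [contDiff_one_iff_deriv]
  refine ⟨g_diff, ?_⟩
  have : deriv g = k := funext deriv_g
  rw [this]; exact k_cont

lemma contDiff_f : ContDiff ℝ 1 f := by
  rw [contDiff_one_iff_deriv]
  refine ⟨f_diff, ?_⟩
  have : deriv f = fun y => (k (f y))⁻¹ := funext deriv_f
  rw [this]
  exact ((k_cont.comp f_cont).inv₀ (fun y => (k_pos _).ne'))

lemma invFun_f (y : ℝ) : Function.invFun f y = g y := by
  have : f (g y) = y := f_g y
  conv_lhs => rw [← this]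
  exact Function.leftInverse_invFun f_inj (g y)

lemma Asq (c u : ℝ) : (k (c * u) * (c * (k u)⁻¹)) ^ 2
    = c ^ 2 * ((1 + 2 * c ^ 2 * u ^ 2) / (1 + 2 * u ^ 2)) := by
  have h2 : k u ^ 2 = 1 + 2 * u ^ 2 := k_sq u
  have h1 : k (c * u) ^ 2 = 1 + 2 * (c * u) ^ 2 := k_sq (c * u)
  have h3 : (k u) ≠ 0 := (k_pos u).ne'
  have h4 : (1 + 2 * u ^ 2) ≠ 0 := (one_add_pos u).ne'
  field_simp
  linear_combination (c ^ 2 * (1 + 2 * u ^ 2)) * h1 - (c ^ 2 * (1 + 2 * c ^ 2 * u ^ 2)) * h2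

lemma norm_gradient_eq (N : ℕ) (φ : EuclideanSpace ℝ (Fin N) → ℝ) (x : EuclideanSpace ℝ (Fin N)) :
    ‖gradient φ x‖ = ‖fderiv ℝ φ x‖ := by
  show ‖(InnerProductSpace.toDual ℝ _).symm (fderiv ℝ φ x)‖ = _
  exact LinearIsometryEquiv.norm_map _ _

/-- The value of `Ψ` along the stretching `v_t`. -/
theorem stmt_4 (N : ℕ) (hN : 1 ≤ N) (h H : ℝ → ℝ) (hcont : Continuous h)
    (hH : ∀ s : ℝ, H s = ∫ τ in (0:ℝ)..s, h τ)
    (v : EuclideanSpace ℝ (Fin N) → ℝ) (hv : ContDiff ℝ 1 v)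
    (hsupp : HasCompactSupport v) (t : ℝ) (ht : 0 < t) :
    ContDiff ℝ 1 (stretch t v) ∧ HasCompactSupport (stretch t v) ∧
    Psi H (stretch t v)
      = t ^ 2 / 2 * (∫ x : EuclideanSpace ℝ (Fin N),
            ((1 + 2 * t ^ N * (f (v x)) ^ 2) / (1 + 2 * (f (v x)) ^ 2))
              * ‖gradient v x‖ ^ 2)
        - t ^ (-(N:ℝ)) * ∫ x : EuclideanSpace ℝ (Fin N),
            H (t ^ ((N:ℝ) / 2) * f (v x)) := by
  set c : ℝ := t ^ ((N:ℝ) / 2) with hc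
  have hc_pos : 0 < c := Real.rpow_pos_of_pos ht _
  have hc_sq : c ^ 2 = t ^ N := by
    have e1 : c ^ 2 = t ^ ((N:ℝ) / 2 * (2:ℕ)) := by
      rw [hc, ← Real.rpow_natCast (t ^ ((N:ℝ)/2)) 2, ← Real.rpow_mul ht.le]
    rw [e1, show ((N:ℝ) / 2 * (2:ℕ)) = (N:ℝ) by push_cast; ring, Real.rpow_natCast]
  have hstretch : stretch t v = fun x => g (c * f (v (t • x))) := by
    funext x; rw [stretch, invFun_f]
  have hsmul : ContDiff ℝ 1 (fun x : EuclideanSpace ℝ (Fin N) => t • x) :=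
    contDiff_id.const_smul t
  have h1 : ContDiff ℝ 1 (stretch t v) := by
    rw [hstretch]
    exact contDiff_g.comp (contDiff_const.mul (contDiff_f.comp (hv.comp hsmul)))
  refine ⟨h1, ?_, ?_⟩
  · rw [hstretch]
    have hce : Topology.IsClosedEmbedding (fun x : EuclideanSpace ℝ (Fin N) => t • x) :=
      (Homeomorph.smulOfNeZero t ht.ne' :
        EuclideanSpace ℝ (Fin N) ≃ₜ EuclideanSpace ℝ (Fin N)).isClosedEmbedding
    have hvs : HasCompactSupport (fun x : EuclideanSpace ℝ (Fin N) => v (t • x)) :=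
      hsupp.comp_isClosedEmbedding hce
    have hz : (fun u : ℝ => g (c * f u)) 0 = 0 := by
      show g (c * f 0) = 0
      rw [f_zero, mul_zero, g_zero]
    exact hvs.comp_left (g := fun u => g (c * f u)) hz
  · have hvdiff : Differentiable ℝ v := hv.differentiable one_ne_zero
    have key : ∀ x : EuclideanSpace ℝ (Fin N), HasFDerivAt (stretch t v)
        ((k (c * f (v (t • x))) * (c * (k (f (v (t • x))))⁻¹) * t) • fderiv ℝ v (t • x)) x := by
      intro x
      rw [hstretch]
      have hsm : HasFDerivAt (fun x : EuclideanSpace ℝ (Fin N) => t • x)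
          (t • ContinuousLinearMap.id ℝ (EuclideanSpace ℝ (Fin N))) x := by
        exact (hasFDerivAt_id x).const_smul t
      have hcomp1 : HasFDerivAt (fun x : EuclideanSpace ℝ (Fin N) => v (t • x))
          ((fderiv ℝ v (t • x)).comp
            (t • ContinuousLinearMap.id ℝ (EuclideanSpace ℝ (Fin N)))) x :=
        (hvdiff (t • x)).hasFDerivAt.comp x hsm
      have hf1 : HasDerivAt (fun u : ℝ => c * f u) (c * (k (f (v (t • x))))⁻¹) (v (t • x)) :=
        (hasDerivAt_f (v (t • x))).const_mul c
      have hφ := HasDerivAt.comp (v (t • x)) (hasDerivAt_g (c * f (v (t • x)))) hf1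
      have hres := hφ.comp_hasFDerivAt x hcomp1
      refine hres.congr_fderiv ?_
      ext y
      simp only [ContinuousLinearMap.smul_apply, ContinuousLinearMap.coe_comp',
        Function.comp_apply, ContinuousLinearMap.coe_smul', Pi.smul_apply,
        ContinuousLinearMap.coe_id', id_eq, ContinuousLinearMap.map_smul, smul_eq_mul]
      ring
    have hgradsq : ∀ x : EuclideanSpace ℝ (Fin N), ‖gradient (stretch t v) x‖ ^ 2
        = (t ^ N * t ^ 2) *
            (((1 + 2 * t ^ N * (f (v (t • x))) ^ 2) / (1 + 2 * (f (v (t • x))) ^ 2))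
              * ‖gradient v (t • x)‖ ^ 2) := by
      intro x
      have hfd : fderiv ℝ (stretch t v) x
          = (k (c * f (v (t • x))) * (c * (k (f (v (t • x))))⁻¹) * t) • fderiv ℝ v (t • x) :=
        (key x).fderiv
      rw [norm_gradient_eq, hfd, norm_smul, mul_pow, Real.norm_eq_abs, sq_abs,
        ← norm_gradient_eq]
      have hA := Asq c (f (v (t • x)))
      rw [mul_pow, hA, hc_sq]
      ring
    have hint1 : (∫ x : EuclideanSpace ℝ (Fin N), ‖gradient (stretch t v) x‖ ^ 2)
        = t ^ 2 * ∫ x : EuclideanSpace ℝ (Fin N),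
            ((1 + 2 * t ^ N * (f (v x)) ^ 2) / (1 + 2 * (f (v x)) ^ 2))
              * ‖gradient v x‖ ^ 2 := by
      have e1 : (∫ x : EuclideanSpace ℝ (Fin N), ‖gradient (stretch t v) x‖ ^ 2)
          = |(t ^ Module.finrank ℝ (EuclideanSpace ℝ (Fin N)))⁻¹| •
              ∫ y : EuclideanSpace ℝ (Fin N), (t ^ N * t ^ 2) *
                (((1 + 2 * t ^ N * (f (v y)) ^ 2) / (1 + 2 * (f (v y)) ^ 2))
                  * ‖gradient v y‖ ^ 2) := by
        rw [integral_congr_ae (Filter.Eventually.of_forall hgradsq)]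
        exact MeasureTheory.Measure.integral_comp_smul volume
          (fun y : EuclideanSpace ℝ (Fin N) => (t ^ N * t ^ 2) *
            (((1 + 2 * t ^ N * (f (v y)) ^ 2) / (1 + 2 * (f (v y)) ^ 2))
              * ‖gradient v y‖ ^ 2)) t
      rw [e1, MeasureTheory.integral_const_mul, finrank_euclideanSpace_fin, smul_eq_mul,
        abs_of_pos (by positivity)]
      have htN : (t : ℝ) ^ N ≠ 0 := by positivity
      field_simp
    have hpt2 : ∀ x : EuclideanSpace ℝ (Fin N), H (f (stretch t v x))
        = H (c * f (v (t • x))) := by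
      intro x
      rw [hstretch]
      simp only [f_g]
    have hint2 : (∫ x : EuclideanSpace ℝ (Fin N), H (f (stretch t v x)))
        = (t ^ N)⁻¹ * ∫ x : EuclideanSpace ℝ (Fin N), H (c * f (v x)) := by
      have e1 : (∫ x : EuclideanSpace ℝ (Fin N), H (f (stretch t v x)))
          = |(t ^ Module.finrank ℝ (EuclideanSpace ℝ (Fin N)))⁻¹| •
              ∫ y : EuclideanSpace ℝ (Fin N), H (c * f (v y)) := by
        rw [integral_congr_ae (Filter.Eventually.of_forall hpt2)]
        exact MeasureTheory.Measure.integral_comp_smul volume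
          (fun y : EuclideanSpace ℝ (Fin N) => H (c * f (v y))) t
      rw [e1, finrank_euclideanSpace_fin, smul_eq_mul, abs_of_pos (by positivity)]
    have hrpow : t ^ (-(N:ℝ)) = ((t:ℝ) ^ N)⁻¹ := by
      rw [Real.rpow_neg ht.le, Real.rpow_natCast]
    rw [Psi, hint1, hint2, hrpow]
    ring
end

section
/- For every ε > 0 there exists M_ε > 0 such that for all x, y ∈ ℝ, |f(x)² − f(x − y)² − f(y)²| ≤ ε x² + M_ε y². -/
open MeasureTheory

lemma hcont : Continuous fun τ : ℝ => Real.sqrt (1 + 2 * τ ^ 2) := by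
  fun_prop

lemma hint (a b : ℝ) : IntervalIntegrable (fun τ : ℝ => Real.sqrt (1 + 2 * τ ^ 2)) volume a b :=
  hcont.intervalIntegrable a b

lemma g_sub {a b : ℝ} (h : a ≤ b) : b - a ≤ g b - g a := by
  have hadd : g a + ∫ τ in a..b, Real.sqrt (1 + 2 * τ ^ 2) = g b :=
    intervalIntegral.integral_add_adjacent_intervals (hint 0 a) (hint a b)
  have hmono : (b - a) • (1:ℝ) ≤ ∫ τ in a..b, Real.sqrt (1 + 2 * τ ^ 2) := by
    rw [← intervalIntegral.integral_const]
    apply intervalIntegral.integral_mono_on h (intervalIntegrable_const) (hint a b)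
    intro x _
    have : (1:ℝ) ≤ 1 + 2 * x ^ 2 := by nlinarith [sq_nonneg x]
    calc (1:ℝ) = Real.sqrt 1 := Real.sqrt_one.symm
      _ ≤ _ := Real.sqrt_le_sqrt this
  simp at hmono
  linarith

lemma g_inj : Function.Injective g := by
  intro a b hab
  by_contra hne
  rcases lt_or_gt_of_ne hne with h | h
  · have := g_sub h.le; linarith
  · have := g_sub h.le; linarith

lemma g_cont : Continuous g :=
  intervalIntegral.continuous_primitive (fun a b => hint a b) 0

lemma gf (u : ℝ) : g (f u) = u := Function.rightInverse_invFun g_surj u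

lemma f_lip (u v : ℝ) : |f u - f v| ≤ |u - v| := by
  rcases le_total (f v) (f u) with h | h
  · have := g_sub h
    rw [gf, gf] at this
    rw [abs_of_nonneg (by linarith)]
    calc f u - f v ≤ u - v := by linarith
      _ ≤ |u - v| := le_abs_self _
  · have := g_sub h
    rw [gf, gf] at this
    rw [abs_of_nonpos (by linarith)]
    calc -(f u - f v) ≤ -(u - v) := by linarith
      _ ≤ |u - v| := neg_le_abs _

lemma f_bound (u : ℝ) : |f u| ≤ |u| := by
  have := f_lip u 0
  simpa [f_zero] using this

/-- The Brezis–Lieb-type pointwise estimate for `f²`. -/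
theorem stmt_10 :
    ∀ ε : ℝ, 0 < ε → ∃ M : ℝ, 0 < M ∧ ∀ x y : ℝ,
      |(f x) ^ 2 - (f (x - y)) ^ 2 - (f y) ^ 2| ≤ ε * x ^ 2 + M * y ^ 2 := by
  intro ε hε
  refine ⟨1 / ε + 2, by positivity, fun x y => ?_⟩
  have h1 : |f x - f (x - y)| ≤ |y| := by
    have := f_lip x (x - y)
    simpa using this
  have h2 : |f x| ≤ |x| := f_bound x
  have h3 : |f (x - y)| ≤ |x - y| := f_bound (x - y)
  have h4 : |f y| ≤ |y| := f_bound y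
  have h5 : |x - y| ≤ |x| + |y| := abs_sub x y
  have key : |(f x) ^ 2 - (f (x - y)) ^ 2| ≤ |y| * (2 * |x| + |y|) := by
    have : (f x) ^ 2 - (f (x - y)) ^ 2 = (f x - f (x - y)) * (f x + f (x - y)) := by ring
    rw [this, abs_mul]
    apply mul_le_mul h1 _ (abs_nonneg _) (abs_nonneg _)
    calc |f x + f (x - y)| ≤ |f x| + |f (x - y)| := abs_add_le _ _
      _ ≤ |x| + (|x| + |y|) := by linarith
      _ = 2 * |x| + |y| := by ring
  have hamgm : 2 * |x| * |y| ≤ ε * x ^ 2 + (1 / ε) * y ^ 2 := by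
    have key2 : ε * (2 * |x| * |y|) ≤ ε * (ε * x ^ 2 + (1 / ε) * y ^ 2) := by
      have he : ε * ((1 / ε) * y ^ 2) = y ^ 2 := by field_simp
      rw [mul_add, he]
      have h7 : (0:ℝ) ≤ (ε * |x| - |y|) ^ 2 := sq_nonneg _
      have h8 : (ε * |x| - |y|) ^ 2 = ε ^ 2 * x ^ 2 - 2 * ε * (|x| * |y|) + y ^ 2 := by
        rw [sub_sq, mul_pow, sq_abs, sq_abs]; ring
      rw [h8] at h7
      nlinarith [h7]
    exact (mul_le_mul_iff_right₀ hε).mp key2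
  calc |(f x) ^ 2 - (f (x - y)) ^ 2 - (f y) ^ 2|
      ≤ |(f x) ^ 2 - (f (x - y)) ^ 2| + |(f y) ^ 2| := abs_sub _ _
    _ ≤ |y| * (2 * |x| + |y|) + y ^ 2 := by
        have : |(f y) ^ 2| = (f y)^2 := abs_of_nonneg (sq_nonneg _)
        rw [this]
        have : (f y)^2 ≤ y ^ 2 := by nlinarith [abs_nonneg (f y), abs_nonneg y, sq_abs (f y), sq_abs y]
        linarith
    _ ≤ ε * x ^ 2 + (1 / ε + 2) * y ^ 2 := by nlinarith [sq_abs y, abs_nonneg y]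
end
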